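/- arXiv:1705.03660 — 2 statements merged into one kernel-verified Lean document; each statement's English description precedes it below -/
import Mathlib

section
/- Let f be meromorphic on 𝔻 with f(z) = 1/(z-p) + ∑_{n=0}^∞ b_n zⁿ, 0 ≤ p < 1, and suppose the coefficients satisfy ∑_{n=1}^∞ n|b_n|² ≤ 1/(1-p²)². Then for all z ∈ 𝔻 with z ≠ p, |f′(z) + 1/(z-p)²| ≤ 1/((1-p²)(1-|z|²)). -/
/-!
Near `z` the function `f` is `1/(w - p) + ∑ bₙ wⁿ`, so `f'(z) + 1/(z - p)² = ∑ n bₙ zⁿ⁻¹`.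
Writing `n |bₙ| |z|ⁿ⁻¹ = (√n |bₙ|) (√n |z|ⁿ⁻¹)`, Cauchy–Schwarz bounds this by
`(∑ n |bₙ|²)^{1/2} (∑ n |z|^{2(n-1)})^{1/2} = (∑ n |bₙ|²)^{1/2} / (1 - |z|²)`, and the coefficient
hypothesis bounds the first factor by `1/(1 - p²)`.
-/

open Metric Topology

lemma hasSum_natCast_mul_pow_pred {𝕜 : Type*} [NormedField 𝕜] [CompleteSpace 𝕜] {r : 𝕜}
    (hr : ‖r‖ < 1) : HasSum (fun n : ℕ => (n : 𝕜) * r ^ (n - 1)) (1 / (1 - r) ^ 2) := by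
  rw [← hasSum_nat_add_iff' 1]
  simpa using hasSum_choose_mul_geometric_of_norm_lt_one 1 hr

lemma summable_and_tsum_mul_le_sqrt_mul_sqrt {ι : Type*} {f g : ι → ℝ} (hf : ∀ i, 0 ≤ f i)
    (hg : ∀ i, 0 ≤ g i) (hf_sum : Summable fun i => f i ^ 2) (hg_sum : Summable fun i => g i ^ 2) :
    (Summable fun i => f i * g i) ∧
      ∑' i, f i * g i ≤ √(∑' i, f i ^ 2) * √(∑' i, g i ^ 2) := by
  simp_rw [← Real.rpow_two, Real.sqrt_eq_rpow] at *
  exact Real.summable_and_inner_le_Lp_mul_Lq_tsum_of_nonneg .two_two hf hg hf_sum hg_sum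

/-- Cauchy–Schwarz against the weights `n t^(2(n-1))`, whose sum is `1 / (1 - t²)²`. -/
lemma summable_and_tsum_le_of_summable_natCast_mul_norm_sq {E : Type*}
    [SeminormedAddCommGroup E] {b : ℕ → E} (hb : Summable fun n => n * ‖b n‖ ^ 2) {t : ℝ}
    (ht0 : 0 ≤ t) (ht1 : t < 1) :
    (Summable fun n => n * ‖b n‖ * t ^ (n - 1)) ∧
      ∑' n, n * ‖b n‖ * t ^ (n - 1) ≤ √(∑' n, n * ‖b n‖ ^ 2) / (1 - t ^ 2) := by
  have ht2 : 0 < 1 - t ^ 2 := by nlinarith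
  have hweights := hasSum_natCast_mul_pow_pred (r := t ^ 2)
    (by rw [Real.norm_of_nonneg (by positivity)]; linarith)
  have hsq : ∀ n : ℕ, (√n * t ^ (n - 1)) ^ 2 = n * (t ^ 2) ^ (n - 1) := fun n => by
    rw [mul_pow, Real.sq_sqrt n.cast_nonneg, ← pow_mul, ← pow_mul, mul_comm 2]
  have hprod : ∀ n : ℕ, √n * ‖b n‖ * (√n * t ^ (n - 1)) = n * ‖b n‖ * t ^ (n - 1) := fun n => by
    linear_combination (‖b n‖ * t ^ (n - 1)) * Real.mul_self_sqrt n.cast_nonneg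
  obtain ⟨hsum, hle⟩ := summable_and_tsum_mul_le_sqrt_mul_sqrt
    (f := fun n : ℕ => √n * ‖b n‖) (g := fun n : ℕ => √n * t ^ (n - 1))
    (fun n => by positivity) (fun n => by positivity)
    (by simpa [mul_pow] using hb) (by simpa only [hsq] using hweights.summable)
  simp only [hprod, hsq, hweights.tsum_eq, mul_pow, Real.sq_sqrt (Nat.cast_nonneg _)] at hsum hle
  refine ⟨hsum, hle.trans_eq ?_⟩
  rw [one_div, Real.sqrt_inv, Real.sqrt_sq ht2.le, div_eq_mul_inv]

lemma hasDerivAt_tsum_mul_pow {𝕜 : Type*} [RCLike 𝕜] {b : ℕ → 𝕜} {r : ℝ}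
    (hb : Summable fun n => n * ‖b n‖ * r ^ (n - 1)) {z : 𝕜} (hz : ‖z‖ < r) :
    HasDerivAt (fun w => ∑' n, b n * w ^ n) (∑' n, n * b n * z ^ (n - 1)) z := by
  refine hasDerivAt_tsum_of_isPreconnected (g := fun n w => b n * w ^ n)
    (g' := fun n w => n * b n * w ^ (n - 1)) hb isOpen_ball (convex_ball 0 r).isPreconnected
    (fun n w _ => ?_) (fun n w hw => ?_) (mem_ball_self ((norm_nonneg z).trans_lt hz)) ?_
    (mem_ball_zero_iff.mpr hz)
  · exact ((hasDerivAt_pow n w).const_mul (b n)).congr_deriv (by ring)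
  · rw [norm_mul, norm_mul, norm_pow, RCLike.norm_natCast]
    gcongr
    exact (mem_ball_zero_iff.mp hw).le
  · exact summable_of_ne_finset_zero (s := {0}) fun n hn => by
      rw [zero_pow (Finset.notMem_singleton.mp hn), mul_zero]

lemma norm_tsum_natCast_mul_pow_pred_le {𝕜 : Type*} [RCLike 𝕜]
    {b : ℕ → 𝕜} (hb : Summable fun n => n * ‖b n‖ ^ 2) {z : 𝕜} (hz : ‖z‖ < 1) :
    ‖∑' n, n * b n * z ^ (n - 1)‖ ≤ √(∑' n, n * ‖b n‖ ^ 2) / (1 - ‖z‖ ^ 2) := by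
  have hnorm : ∀ n : ℕ, ‖n * b n * z ^ (n - 1)‖ = n * ‖b n‖ * ‖z‖ ^ (n - 1) := fun n => by
    rw [norm_mul, norm_mul, norm_pow, RCLike.norm_natCast]
  obtain ⟨hsum, hle⟩ := summable_and_tsum_le_of_summable_natCast_mul_norm_sq hb (norm_nonneg z) hz
  calc ‖∑' n, n * b n * z ^ (n - 1)‖
      ≤ ∑' n : ℕ, ‖n * b n * z ^ (n - 1)‖ := norm_tsum_le_tsum_norm (by simpa only [hnorm])
    _ = ∑' n : ℕ, n * ‖b n‖ * ‖z‖ ^ (n - 1) := tsum_congr hnorm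
    _ ≤ _ := hle

lemma hasDerivAt_one_div_sub {𝕜 : Type*} [NontriviallyNormedField 𝕜] {a z : 𝕜} (h : z ≠ a) :
    HasDerivAt (fun w => 1 / (w - a)) (-(1 / (z - a) ^ 2)) z := by
  simpa [one_div, neg_div, Pi.inv_def] using
    ((hasDerivAt_id z).sub_const a).inv (sub_ne_zero.mpr h)

theorem stmt_9_general (p : ℝ) (hp0 : 0 ≤ p) (hp1 : p < 1) (f : ℂ → ℂ) (b : ℕ → ℂ)
    (hf : ∀ z ∈ ball (0 : ℂ) 1, z ≠ (p : ℂ) →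
      f z = 1 / (z - p) + ∑' n : ℕ, b n * z ^ n)
    (hb : Summable (fun n : ℕ => (n : ℝ) * ‖b n‖ ^ 2))
    (hbound : ∑' n : ℕ, (n : ℝ) * ‖b n‖ ^ 2 ≤ 1 / (1 - p ^ 2) ^ 2) :
    ∀ z ∈ ball (0 : ℂ) 1, z ≠ (p : ℂ) →
      ‖deriv f z + 1 / (z - p) ^ 2‖ ≤ 1 / ((1 - p ^ 2) * (1 - ‖z‖ ^ 2)) := by
  intro z hz hzp
  have hz1 : ‖z‖ < 1 := mem_ball_zero_iff.mp hz
  obtain ⟨r, hzr, hr1⟩ := exists_between hz1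
  have hf_eq : f =ᶠ[𝓝 z] fun w => 1 / (w - p) + ∑' n : ℕ, b n * w ^ n :=
    Filter.eventually_of_mem ((isOpen_ball.sdiff isClosed_singleton).mem_nhds ⟨hz, hzp⟩)
      fun w hw => hf w hw.1 hw.2
  have hseries := hasDerivAt_tsum_mul_pow (summable_and_tsum_le_of_summable_natCast_mul_norm_sq
    hb ((norm_nonneg z).trans hzr.le) hr1).1 hzr
  have hderiv : deriv f z + 1 / (z - p) ^ 2 = ∑' n : ℕ, n * b n * z ^ (n - 1) := by
    rw [(((hasDerivAt_one_div_sub hzp).add hseries).congr_of_eventuallyEq hf_eq).deriv]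
    ring
  have hp2 : 0 < 1 - p ^ 2 := by nlinarith
  have hz2 : 0 < 1 - ‖z‖ ^ 2 := by nlinarith [norm_nonneg z]
  calc ‖deriv f z + 1 / (z - p) ^ 2‖
      ≤ √(∑' n : ℕ, n * ‖b n‖ ^ 2) / (1 - ‖z‖ ^ 2) :=
        hderiv ▸ norm_tsum_natCast_mul_pow_pred_le hb hz1
    _ ≤ √(1 / (1 - p ^ 2) ^ 2) / (1 - ‖z‖ ^ 2) := by gcongr
    _ = 1 / ((1 - p ^ 2) * (1 - ‖z‖ ^ 2)) := by
      rw [one_div, Real.sqrt_inv, Real.sqrt_sq hp2.le]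
      field_simp

theorem stmt_9 (p : ℝ) (hp0 : 0 ≤ p) (hp1 : p < 1) (f : ℂ → ℂ) (b : ℕ → ℂ)
    (hfdiff : DifferentiableOn ℂ f (ball (0 : ℂ) 1 \ {(p : ℂ)}))
    (hf : ∀ z ∈ ball (0 : ℂ) 1, z ≠ (p : ℂ) →
      f z = 1 / (z - p) + ∑' n : ℕ, b n * z ^ n)
    (hb : Summable (fun n : ℕ => (n : ℝ) * ‖b n‖ ^ 2))
    (hbound : ∑' n : ℕ, (n : ℝ) * ‖b n‖ ^ 2 ≤ 1 / (1 - p ^ 2) ^ 2) :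
    ∀ z ∈ ball (0 : ℂ) 1, z ≠ (p : ℂ) →
      ‖deriv f z + 1 / (z - p) ^ 2‖ ≤ 1 / ((1 - p ^ 2) * (1 - ‖z‖ ^ 2)) :=
  stmt_9_general p hp0 hp1 f b hf hb hbound
end

section
/- Let 0 ≤ p < 1 and n ≥ 1. Then (1/π)∬_𝔻 |ζ|^{n-1}/|1-pζ|² dξ dη = 2·∑_{m=0}^∞ p^{2m}/(n+2m+1), where ζ = ξ + iη. -/
/-!
In polar coordinates the integral is `2π ∫₀¹ r^n A(r) dr`, where `A(r)` is the mean of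
`|1 - pζ|⁻²` over the circle `|ζ| = r`. On that circle `|1 - pζ|⁻² = (1 - p²r²)⁻¹ P(ζ)`, with `P`
the Poisson kernel of the disc of radius `r` at the point `pr²`; the Poisson kernel has mean `1`,
so `A(r) = (1 - p²r²)⁻¹`. Expanding `rⁿ / (1 - p²r²)` as a geometric series and integrating term by
term gives the sum.
-/

open MeasureTheory Metric Set Real ComplexConjugate

section PolarCoordinates

variable {E : Type*} [NormedAddCommGroup E] [NormedSpace ℝ E]

theorem Complex.polarCoord_symm_eq_circleMap (q : ℝ × ℝ) :
    Complex.polarCoord.symm q = circleMap 0 q.1 q.2 := by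
  rw [Complex.polarCoord_symm_apply, circleMap_zero, Complex.exp_mul_I]
  push_cast
  ring

theorem setIntegral_ball_eq_setIntegral_polarCoord (f : ℂ → E) (R : ℝ) :
    ∫ z in ball (0 : ℂ) R, f z = ∫ q in Ioo 0 R ×ˢ Ioo (-π) π, q.1 • f (circleMap 0 q.1 q.2) := by
  have hpre : Complex.polarCoord.target ∩ (fun q : ℝ × ℝ ↦ circleMap 0 q.1 q.2) ⁻¹' ball 0 R
      = Ioo 0 R ×ˢ Ioo (-π) π := by
    ext ⟨r, θ⟩
    simp only [Complex.polarCoord_target, mem_inter_iff, mem_prod, mem_Ioi, mem_preimage,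
      mem_ball_zero_iff, norm_circleMap_zero, mem_Ioo]
    constructor
    · rintro ⟨⟨hr, hθ⟩, hR⟩
      exact ⟨⟨hr, (le_abs_self r).trans_lt hR⟩, hθ⟩
    · rintro ⟨⟨hr, hR⟩, hθ⟩
      exact ⟨⟨hr, hθ⟩, by rwa [abs_of_pos hr]⟩
  rw [← integral_indicator measurableSet_ball, ← Complex.integral_comp_polarCoord_symm, ← hpre,
    ← setIntegral_indicator (measurableSet_ball.preimage circleMap.continuous.measurable)]
  congr 1 with q
  rw [Complex.polarCoord_symm_eq_circleMap]
  by_cases h : circleMap 0 q.1 q.2 ∈ ball 0 R <;> simp [indicator, h]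

theorem setIntegral_Ioo_circleMap_eq_circleAverage (f : ℂ → E) (r : ℝ) :
    ∫ θ in Ioo (-π) π, f (circleMap 0 r θ) = (2 * π) • circleAverage f 0 r := by
  rw [circleAverage_def, smul_inv_smul₀ (by positivity), ← integral_Ioc_eq_integral_Ioo,
    ← intervalIntegral.integral_of_le (by linarith [pi_pos])]
  have : Function.Periodic (fun θ ↦ f (circleMap 0 r θ)) (2 * π) :=
    (periodic_circleMap 0 r).comp f
  convert this.intervalIntegral_add_eq (-π) 0 using 2 <;> ring

theorem integral_ball_eq_integral_circleAverage {f : ℂ → E} {R : ℝ} (hR : 0 ≤ R)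
    (hf : ContinuousOn f (closedBall 0 R)) :
    ∫ z in ball (0 : ℂ) R, f z = (2 * π) • ∫ r in 0..R, r • circleAverage f 0 r := by
  have hint : IntegrableOn (fun q : ℝ × ℝ ↦ q.1 • f (circleMap 0 q.1 q.2))
      (Ioo 0 R ×ˢ Ioo (-π) π) (volume.prod volume) := by
    refine (ContinuousOn.integrableOn_compact (isCompact_Icc.prod isCompact_Icc) ?_).mono_set
      (prod_mono Ioo_subset_Icc_self Ioo_subset_Icc_self)
    refine continuous_fst.continuousOn.smul (hf.comp circleMap.continuous.continuousOn ?_)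
    rintro ⟨r, θ⟩ ⟨⟨hr, hrR⟩, -⟩
    simpa [abs_of_nonneg hr] using hrR
  rw [setIntegral_ball_eq_setIntegral_polarCoord, Measure.volume_eq_prod, setIntegral_prod _ hint,
    intervalIntegral.integral_of_le hR, integral_Ioc_eq_integral_Ioo, ← integral_smul]
  refine setIntegral_congr_fun measurableSet_Ioo fun r _ ↦ ?_
  rw [integral_smul, setIntegral_Ioo_circleMap_eq_circleAverage, smul_comm]

end PolarCoordinates

theorem norm_one_sub_mul_pos {a z : ℂ} (h : ‖a‖ * ‖z‖ < 1) : 0 < ‖1 - a * z‖ := by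
  have := norm_sub_norm_le (1 : ℂ) (a * z)
  rw [norm_one, norm_mul] at this
  linarith

theorem circleAverage_inv_norm_one_sub_mul_sq {a : ℂ} {r : ℝ} (h : ‖a‖ * |r| < 1) :
    circleAverage (fun z ↦ (‖1 - a * z‖ ^ 2)⁻¹) 0 r = (1 - (‖a‖ * r) ^ 2)⁻¹ := by
  rcases eq_or_ne r 0 with rfl | hr
  · simp
  set w : ℂ := conj a * (r : ℂ) ^ 2
  have hw_norm : ‖w‖ = ‖a‖ * r ^ 2 := by simp [w]
  have hw : w ∈ ball 0 |r| := by
    rw [mem_ball_zero_iff, hw_norm, ← sq_abs, sq, ← mul_assoc]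
    exact mul_lt_of_lt_one_left (abs_pos.mpr hr) h
  have hpoisson : circleAverage (poissonKernel 0 w) 0 r = 1 := by
    have := InnerProductSpace.harmonicContOnCl_const (c := (1 : ℝ)) (s := ball 0 |r|)
      |>.circleAverage_poissonKernel_smul hw
    rwa [circleAverage_abs_radius, smul_eq_mul, ← Pi.one_def, mul_one] at this
  -- On the circle `‖z‖ = |r|` one has `z - w = z * conj (1 - a * z)`.
  have hsphere : EqOn (fun z ↦ (‖1 - a * z‖ ^ 2)⁻¹)
      ((1 - (‖a‖ * r) ^ 2)⁻¹ • poissonKernel 0 w) (sphere 0 |r|) := by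
    intro z hz
    rw [mem_sphere_zero_iff_norm] at hz
    have hz_sq : (r : ℂ) ^ 2 = z * conj z := by
      rw [Complex.mul_conj, Complex.normSq_eq_norm_sq, hz, sq_abs, Complex.ofReal_pow]
    have hdist : ‖z - w‖ = |r| * ‖1 - a * z‖ := by
      rw [← hz, ← Complex.norm_conj (1 - a * z), ← norm_mul]
      congr 1
      simp only [w, hz_sq, map_sub, map_one, map_mul]
      ring
    have hne := (norm_one_sub_mul_pos (hz ▸ h)).ne'
    have hne' : 1 - (‖a‖ * r) ^ 2 ≠ 0 := by
      have : (‖a‖ * r) ^ 2 < 1 := by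
        rw [← sq_abs, abs_mul, abs_norm]
        exact pow_lt_one₀ (by positivity) h two_ne_zero
      linarith
    simp only [Pi.smul_apply, smul_eq_mul, poissonKernel_def, sub_zero, hz, hw_norm, hdist,
      mul_pow, sq_abs] at hne' ⊢
    field_simp
  rw [circleAverage_congr_sphere hsphere, circleAverage_smul, hpoisson, smul_eq_mul, mul_one]

theorem circleAverage_norm_pow_div_norm_one_sub_mul_sq {a : ℂ} {r : ℝ} (h : ‖a‖ * |r| < 1)
    (k : ℕ) :
    circleAverage (fun z ↦ ‖z‖ ^ k / ‖1 - a * z‖ ^ 2) 0 r = |r| ^ k * (1 - (‖a‖ * r) ^ 2)⁻¹ := by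
  have hsphere : EqOn (fun z ↦ ‖z‖ ^ k / ‖1 - a * z‖ ^ 2)
      (|r| ^ k • fun z ↦ (‖1 - a * z‖ ^ 2)⁻¹) (sphere 0 |r|) := fun z hz ↦ by
    simp [mem_sphere_zero_iff_norm.mp hz, div_eq_mul_inv]
  rw [circleAverage_congr_sphere hsphere, circleAverage_smul,
    circleAverage_inv_norm_one_sub_mul_sq h, smul_eq_mul]

theorem hasSum_integral_pow_div_one_sub_mul_sq {q : ℝ} (hq : |q| < 1) (n : ℕ) :
    HasSum (fun m : ℕ ↦ q ^ m / (n + 2 * m + 1)) (∫ x in 0..1, x ^ n / (1 - q * x ^ 2)) := by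
  have hsum : HasSum (fun m : ℕ ↦ ∫ x in 0..1, q ^ m * x ^ (n + 2 * m))
      (∫ x in 0..1, x ^ n / (1 - q * x ^ 2)) := by
    refine intervalIntegral.hasSum_integral_of_dominated_convergence (fun m _ ↦ |q| ^ m)
      (fun m ↦ (by fun_prop : Continuous _).aestronglyMeasurable)
      (fun m ↦ Filter.Eventually.of_forall fun x hx ↦ ?_)
      (Filter.Eventually.of_forall fun _ _ ↦ summable_geometric_of_lt_one (abs_nonneg q) hq)
      intervalIntegrable_const (Filter.Eventually.of_forall fun x hx ↦ ?_) <;>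
      rw [uIoc_of_le zero_le_one] at hx
    · rw [norm_mul, norm_pow, norm_pow, Real.norm_eq_abs, Real.norm_eq_abs, abs_of_pos hx.1]
      exact mul_le_of_le_one_right (by positivity) (pow_le_one₀ hx.1.le hx.2)
    · have hqx : |q * x ^ 2| < 1 := by
        rw [abs_mul, abs_pow, abs_of_pos hx.1]
        exact mul_lt_one_of_nonneg_of_lt_one_left (abs_nonneg q) hq (pow_le_one₀ hx.1.le hx.2)
      have hterm : (fun m : ℕ ↦ q ^ m * x ^ (n + 2 * m)) = fun m ↦ x ^ n * (q * x ^ 2) ^ m :=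
        funext fun m ↦ by ring
      rw [hterm, div_eq_mul_inv]
      exact (hasSum_geometric_of_abs_lt_one hqx).mul_left (x ^ n)
  convert hsum using 1
  ext m
  rw [intervalIntegral.integral_const_mul, integral_pow]
  push_cast
  ring

theorem stmt_12 (p : ℝ) (hp0 : 0 ≤ p) (hp1 : p < 1) (n : ℕ) (hn : 1 ≤ n) :
    (1 / π) * ∫ ζ in ball (0 : ℂ) 1, ‖ζ‖ ^ (n - 1) / ‖1 - p * ζ‖ ^ 2 =
      2 * ∑' m : ℕ, p ^ (2 * m) / (n + 2 * m + 1) := by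
  have hp : ‖(p : ℂ)‖ = p := by rw [Complex.norm_real, Real.norm_eq_abs, abs_of_nonneg hp0]
  have hcont : ContinuousOn (fun ζ : ℂ ↦ ‖ζ‖ ^ (n - 1) / ‖1 - p * ζ‖ ^ 2) (closedBall 0 1) := by
    refine ContinuousOn.div (by fun_prop) (by fun_prop) fun ζ hζ ↦ ?_
    refine (pow_pos (norm_one_sub_mul_pos ?_) 2).ne'
    rw [hp]
    exact (mul_le_of_le_one_right hp0 (mem_closedBall_zero_iff.mp hζ)).trans_lt hp1
  have hradial : EqOn
      (fun r : ℝ ↦ r • circleAverage (fun ζ : ℂ ↦ ‖ζ‖ ^ (n - 1) / ‖1 - p * ζ‖ ^ 2) 0 r)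
      (fun r ↦ r ^ n / (1 - p ^ 2 * r ^ 2)) (uIcc 0 1) := by
    intro r hr
    rw [uIcc_of_le zero_le_one] at hr
    have hpr : ‖(p : ℂ)‖ * |r| < 1 := by
      rw [hp, abs_of_nonneg hr.1]
      exact (mul_le_of_le_one_right hp0 hr.2).trans_lt hp1
    dsimp only
    rw [circleAverage_norm_pow_div_norm_one_sub_mul_sq hpr, hp, abs_of_nonneg hr.1, smul_eq_mul,
      ← mul_assoc, ← pow_succ', Nat.sub_add_cancel hn, mul_pow, div_eq_mul_inv]
  have hq : |p ^ 2| < 1 := by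
    rw [abs_of_nonneg (sq_nonneg p)]
    exact pow_lt_one₀ hp0 hp1 two_ne_zero
  simp_rw [pow_mul]
  rw [integral_ball_eq_integral_circleAverage zero_le_one hcont,
    intervalIntegral.integral_congr hradial,
    ← (hasSum_integral_pow_div_one_sub_mul_sq hq n).tsum_eq, smul_eq_mul]
  field_simp
end
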